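/- arXiv:2601.15272 — 4 statements merged into one kernel-verified Lean document; each statement's English description precedes it below -/
import Mathlib

section
/- Product form of the (φ,φ')-deformed Lucasnomial power: for all x, y ∈ ℂ and every n ≥ 1, if {m}_{s,t} ≠ 0 for all 1 ≤ m ≤ n, then (x ⊕_{φ,φ'} y)^{(n)} = ∏_{k=0}^{n−1} (φᵏ·x + φ'ᵏ·y), and (x ⊕_{φ,φ'} y)^{(0)} = 1. -/
open scoped BigOperators

noncomputable section

/-- The Lucas sequence `{n}_{s,t}`. -/
def lucasSeq (s t : ℂ) : ℕ → ℂ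
  | 0 => 0
  | 1 => 1
  | n + 2 => s * lucasSeq s t (n + 1) + t * lucasSeq s t n

/-- The Lucastorial `{n}_{s,t}!`. -/
def lucasFact (s t : ℂ) : ℕ → ℂ
  | 0 => 1
  | n + 1 => lucasFact s t n * lucasSeq s t (n + 1)

/-- The Lucasnomial coefficient `{n choose k}_{s,t}`. -/
def lucasBinom (s t : ℂ) (n k : ℕ) : ℂ :=
  lucasFact s t n / (lucasFact s t k * lucasFact s t (n - k))

/-- The `(u,v)`-deformed Lucasnomial power `(x ⊕_{u,v} y)^{(n)}`. -/
def lucasPow (s t u v x y : ℂ) (n : ℕ) : ℂ :=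
  ∑ k ∈ Finset.range (n + 1),
    lucasBinom s t n k * u ^ ((n - k).choose 2) * v ^ (k.choose 2) * x ^ (n - k) * y ^ k

/-- The Lucas-derivative with respect to the roots `p = φ`, `q = φ'`. -/
def lucasDeriv (p q : ℂ) (f : ℂ → ℂ) (x : ℂ) : ℂ :=
  (f (p * x) - f (q * x)) / ((p - q) * x)

/-- The Lucas-derivative, extended by `0` at `0`, as an operator suitable for iteration. -/
def lucasDeriv0 (p q : ℂ) (f : ℂ → ℂ) : ℂ → ℂ :=
  fun x => if x = 0 then 0 else (f (p * x) - f (q * x)) / ((p - q) * x)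

/-- The Lucas-Pantograph exponential `exp_{s,t}(z,u)`. -/
def lucasExp (s t u z : ℂ) : ℂ :=
  ∑' n : ℕ, u ^ (n.choose 2) * z ^ n / lucasFact s t n

/-- The Lucas-Pantograph sine `sin_{s,t}(z,u)`. -/
def lucasSin (s t u z : ℂ) : ℂ :=
  ∑' n : ℕ, (-1 : ℂ) ^ n * u ^ ((2 * n + 1).choose 2) * z ^ (2 * n + 1) / lucasFact s t (2 * n + 1)

/-- The Lucas-Pantograph cosine `cos_{s,t}(z,u)`. -/
def lucasCos (s t u z : ℂ) : ℂ :=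
  ∑' n : ℕ, (-1 : ℂ) ^ n * u ^ ((2 * n).choose 2) * z ^ (2 * n) / lucasFact s t (2 * n)

/-!
With `p`, `q` the roots of `X² - sX - t`, the Lucas sequence satisfies
`{a + b} = p ^ a * {b} + q ^ b * {a}`, which gives the Pascal rule
`{n+1 choose k+1} = p ^ (n - k) * {n choose k} + q ^ (k + 1) * {n choose k+1}`.
The product `P n x y = ∏ k < n, (p ^ k * x + q ^ k * y)` satisfies
`P (n + 1) x y = (x + y) * P n (p * x) (q * y)`, and the Pascal rule is exactly the statement
that the deformed sum obeys the same recursion. Because Lucasnomials are quotients, the expansion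
is done with the division-free coefficients given by the Pascal rule; these agree with the
Lucasnomials as long as no `{m}` with `1 ≤ m ≤ n` vanishes.
-/

theorem Nat.choose_two_succ (m : ℕ) : (m + 1).choose 2 = m + m.choose 2 := by
  rw [Nat.choose_succ_succ', Nat.choose_one_right]

theorem lucasSeq_add_two (s t : ℂ) (n : ℕ) :
    lucasSeq s t (n + 2) = s * lucasSeq s t (n + 1) + t * lucasSeq s t n := rfl

theorem lucasSeq_succ_eq_pow_add {s t p q : ℂ} (hsum : p + q = s) (hmul : p * q = -t) (k : ℕ) :
    lucasSeq s t (k + 1) = p ^ k + q * lucasSeq s t k := by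
  induction k using Nat.twoStepInduction with
  | zero => simp [lucasSeq]
  | one =>
    simp only [lucasSeq]
    linear_combination -hsum
  | more k _ ih =>
    rw [lucasSeq_add_two, ih]
    linear_combination (-(p ^ (k + 1)) - q * lucasSeq s t (k + 1)) * hsum
      + lucasSeq s t (k + 1) * hmul

theorem lucasSeq_add {s t p q : ℂ} (hsum : p + q = s) (hmul : p * q = -t) (a b : ℕ) :
    lucasSeq s t (a + b) = p ^ a * lucasSeq s t b + q ^ b * lucasSeq s t a := by
  induction b using Nat.twoStepInduction with
  | zero => simp [lucasSeq]
  | one => simp [lucasSeq_succ_eq_pow_add hsum hmul, lucasSeq]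
  | more b ih₁ ih₂ =>
    rw [← add_assoc, lucasSeq_add_two, add_assoc, ih₂, ih₁, lucasSeq_add_two]
    linear_combination (-(q ^ (b + 1)) * lucasSeq s t a) * hsum
      + q ^ b * lucasSeq s t a * hmul

theorem lucasFact_succ (s t : ℂ) (n : ℕ) :
    lucasFact s t (n + 1) = lucasFact s t n * lucasSeq s t (n + 1) := rfl

theorem lucasFact_ne_zero {s t : ℂ} {n : ℕ}
    (hL : ∀ m, 1 ≤ m → m ≤ n → lucasSeq s t m ≠ 0) {k : ℕ} (hk : k ≤ n) : lucasFact s t k ≠ 0 := by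
  induction k with
  | zero => exact one_ne_zero
  | succ k ih => exact mul_ne_zero (ih (by omega)) (hL (k + 1) (by omega) hk)

@[simp]
theorem lucasPow_zero (s t u v x y : ℂ) : lucasPow s t u v x y 0 = 1 := by
  simp [lucasPow, lucasBinom, lucasFact]

/-- Division-free Lucasnomials, defined by the Pascal rule for the roots `p`, `q` of
`X² - sX - t`. -/
def lucasChoose (p q : ℂ) : ℕ → ℕ → ℂ
  | _, 0 => 1
  | 0, _ + 1 => 0
  | n + 1, k + 1 => p ^ (n - k) * lucasChoose p q n k + q ^ (k + 1) * lucasChoose p q n (k + 1)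

section lucasChoose

variable {p q : ℂ}

@[simp]
theorem lucasChoose_zero_right (n : ℕ) : lucasChoose p q n 0 = 1 := by
  cases n <;> rfl

theorem lucasChoose_succ_succ (n k : ℕ) :
    lucasChoose p q (n + 1) (k + 1) =
      p ^ (n - k) * lucasChoose p q n k + q ^ (k + 1) * lucasChoose p q n (k + 1) := rfl

theorem lucasChoose_eq_zero_of_lt {n k : ℕ} (h : n < k) : lucasChoose p q n k = 0 := by
  obtain ⟨k, rfl⟩ := Nat.exists_eq_add_one_of_ne_zero (by omega : k ≠ 0)
  induction n generalizing k with
  | zero => rfl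
  | succ n ih =>
    obtain ⟨k, rfl⟩ := Nat.exists_eq_add_one_of_ne_zero (by omega : k ≠ 0)
    rw [lucasChoose_succ_succ, ih k (by omega), ih (k + 1) (by omega), mul_zero, mul_zero, add_zero]

@[simp]
theorem lucasChoose_self (n : ℕ) : lucasChoose p q n n = 1 := by
  induction n with
  | zero => rfl
  | succ n ih => simp [lucasChoose_succ_succ, ih, lucasChoose_eq_zero_of_lt (Nat.lt_succ_self n)]

theorem lucasChoose_mul_lucasFact_mul_lucasFact {s t : ℂ} (hsum : p + q = s) (hmul : p * q = -t)
    {n k : ℕ} (hk : k ≤ n) :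
    lucasChoose p q n k * lucasFact s t k * lucasFact s t (n - k) = lucasFact s t n := by
  induction n generalizing k with
  | zero =>
    obtain rfl : k = 0 := by omega
    simp [lucasFact]
  | succ n ih =>
    rcases k with _ | k
    · simp [lucasFact]
    obtain rfl | hkn := eq_or_lt_of_le (Nat.le_of_succ_le_succ hk)
    · simp [lucasFact]
    obtain ⟨j, hj⟩ : ∃ j, n - k = j + 1 := ⟨n - k - 1, by omega⟩
    have ih₁ := ih hkn.le
    have ih₂ := ih (k := k + 1) hkn
    rw [hj, lucasFact_succ s t j] at ih₁
    rw [show n - (k + 1) = j by omega, lucasFact_succ s t k] at ih₂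
    have hsplit : lucasSeq s t (n + 1) =
        p ^ (j + 1) * lucasSeq s t (k + 1) + q ^ (k + 1) * lucasSeq s t (j + 1) := by
      rw [show n + 1 = j + 1 + (k + 1) by omega, lucasSeq_add hsum hmul]
    rw [Nat.add_sub_add_right, hj, lucasChoose_succ_succ, hj, lucasFact_succ s t k,
      lucasFact_succ s t j, lucasFact_succ s t n]
    linear_combination p ^ (j + 1) * lucasSeq s t (k + 1) * ih₁
      + q ^ (k + 1) * lucasSeq s t (j + 1) * ih₂ - lucasFact s t n * hsplit

end lucasChoose

theorem lucasChoose_succ_succ_term (p q x y : ℂ) {n k : ℕ} (hk : k ≤ n) :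
    lucasChoose p q (n + 1) (k + 1) * p ^ ((n - k).choose 2) * q ^ ((k + 1).choose 2) *
        x ^ (n - k) * y ^ (k + 1) =
      y * (lucasChoose p q n k * p ^ ((n - k).choose 2) * q ^ (k.choose 2) *
          (p * x) ^ (n - k) * (q * y) ^ k) +
        x * (lucasChoose p q n (k + 1) * p ^ ((n - (k + 1)).choose 2) *
          q ^ ((k + 1).choose 2) * (p * x) ^ (n - (k + 1)) * (q * y) ^ (k + 1)) := by
  rw [lucasChoose_succ_succ]
  obtain rfl | hkn := eq_or_lt_of_le hk
  · rw [lucasChoose_eq_zero_of_lt (Nat.lt_succ_self k), Nat.choose_two_succ, pow_add]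
    ring
  obtain ⟨j, hj⟩ : ∃ j, n - k = j + 1 := ⟨n - k - 1, by omega⟩
  rw [show n - (k + 1) = j by omega, hj, Nat.choose_two_succ j, Nat.choose_two_succ k]
  ring

theorem prod_range_eq_sum_lucasChoose (p q x y : ℂ) (n : ℕ) :
    ∏ k ∈ Finset.range n, (p ^ k * x + q ^ k * y) =
      ∑ k ∈ Finset.range (n + 1),
        lucasChoose p q n k * p ^ ((n - k).choose 2) * q ^ (k.choose 2) * x ^ (n - k) * y ^ k := by
  induction n generalizing x y with
  | zero => simp
  | succ n ih =>
    set T : ℕ → ℂ := fun k => lucasChoose p q n k * p ^ ((n - k).choose 2) *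
      q ^ (k.choose 2) * (p * x) ^ (n - k) * (q * y) ^ k with hT
    have hfirst : p ^ ((n + 1).choose 2) * x ^ (n + 1) = x * T 0 := by
      simp only [hT, lucasChoose_zero_right, Nat.sub_zero, Nat.choose_two_succ,
        Nat.choose_zero_succ, pow_zero, pow_add, mul_pow, mul_one]
      ring
    have hlast : T (n + 1) = 0 := by
      simp [hT, lucasChoose_eq_zero_of_lt (Nat.lt_succ_self n)]
    have hshift :
        ∑ k ∈ Finset.range (n + 1), T (k + 1) + T 0 = ∑ k ∈ Finset.range (n + 1), T k := by
      rw [← Finset.sum_range_succ', Finset.sum_range_succ, hlast, add_zero]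
    calc ∏ k ∈ Finset.range (n + 1), (p ^ k * x + q ^ k * y)
        = (x + y) * ∏ k ∈ Finset.range n, (p ^ k * (p * x) + q ^ k * (q * y)) := by
          rw [Finset.prod_range_succ', mul_comm]
          simp only [pow_succ, pow_zero, one_mul, mul_assoc]
      _ = (x + y) * ∑ k ∈ Finset.range (n + 1), T k := by rw [ih]
      _ = x * T 0 + ∑ k ∈ Finset.range (n + 1), (y * T k + x * T (k + 1)) := by
          rw [Finset.sum_add_distrib, ← Finset.mul_sum, ← Finset.mul_sum, ← hshift]
          ring
      _ = _ := by
          rw [Finset.sum_range_succ' _ (n + 1)]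
          simp only [Nat.add_sub_add_right, lucasChoose_zero_right, Nat.sub_zero,
            Nat.choose_zero_succ, pow_zero, mul_one, one_mul]
          rw [hfirst, add_comm, Finset.sum_congr rfl fun k hk =>
            lucasChoose_succ_succ_term p q x y (Finset.mem_range_succ_iff.mp hk)]

theorem lucasBinom_eq_lucasChoose {s t p q : ℂ} (hsum : p + q = s) (hmul : p * q = -t)
    {n k : ℕ} (hk : k ≤ n) (hk₀ : lucasFact s t k ≠ 0)
    (hnk₀ : lucasFact s t (n - k) ≠ 0) :
    lucasBinom s t n k = lucasChoose p q n k := by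
  rw [lucasBinom, div_eq_iff (mul_ne_zero hk₀ hnk₀),
    ← lucasChoose_mul_lucasFact_mul_lucasFact hsum hmul hk, mul_assoc]

theorem lucasPow_eq_prod {s t p q : ℂ} (hsum : p + q = s) (hmul : p * q = -t) (x y : ℂ)
    {n : ℕ} (hL : ∀ m, 1 ≤ m → m ≤ n → lucasSeq s t m ≠ 0) :
    lucasPow s t p q x y n = ∏ k ∈ Finset.range n, (p ^ k * x + q ^ k * y) := by
  rw [prod_range_eq_sum_lucasChoose, lucasPow]
  refine Finset.sum_congr rfl fun k hk => ?_
  have hkn : k ≤ n := Finset.mem_range_succ_iff.mp hk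
  rw [lucasBinom_eq_lucasChoose hsum hmul hkn (lucasFact_ne_zero hL hkn)
    (lucasFact_ne_zero hL (Nat.sub_le n k))]

theorem lucasPow_phi_prod_general (s t : ℂ)
    (d : ℂ) (hd : d ^ 2 = s ^ 2 + 4 * t) (x y : ℂ) (n : ℕ)
    (hL : ∀ m, 1 ≤ m → m ≤ n → lucasSeq s t m ≠ 0) :
    lucasPow s t ((s + d) / 2) ((s - d) / 2) x y n =
      ∏ k ∈ Finset.range n, (((s + d) / 2) ^ k * x + ((s - d) / 2) ^ k * y) ∧
    lucasPow s t ((s + d) / 2) ((s - d) / 2) x y 0 = 1 := by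
  have hsum : (s + d) / 2 + (s - d) / 2 = s := by ring
  have hmul : (s + d) / 2 * ((s - d) / 2) = -t := by
    linear_combination (-1 / 4 : ℂ) * hd
  exact ⟨lucasPow_eq_prod hsum hmul x y hL, lucasPow_zero ..⟩

/-- Product form of the `(φ,φ')`-deformed Lucasnomial power, where `φ = (s+d)/2` and
`φ' = (s-d)/2` with `d` a square root of `s²+4t`. -/
theorem lucasPow_phi_prod (s t : ℂ) (hs : s ≠ 0) (ht : t ≠ 0)
    (d : ℂ) (hd : d ^ 2 = s ^ 2 + 4 * t) (x y : ℂ) (n : ℕ) (hn : 1 ≤ n)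
    (hL : ∀ m, 1 ≤ m → m ≤ n → lucasSeq s t m ≠ 0) :
    lucasPow s t ((s + d) / 2) ((s - d) / 2) x y n =
      ∏ k ∈ Finset.range n, (((s + d) / 2) ^ k * x + ((s - d) / 2) ^ k * y) ∧
    lucasPow s t ((s + d) / 2) ((s - d) / 2) x y 0 = 1 :=
  lucasPow_phi_prod_general s t d hd x y n hL
end
end

section
/- Lucas-Pantograph-Euler formulas: for x, z ∈ ℂ and u ∈ ℂ with u ≠ 0: (1) if the series defining exp_{s,t}(ix, u) converges absolutely, then exp_{s,t}(ix, u) = cos_{s,t}(x,u) + i·sin_{s,t}(x,u); (2) if the series defining exp_{s,t}(z, −u) converges absolutely, then exp_{s,t}(z, −u) = cos_{s,t}(z,u) + sin_{s,t}(z,u). -/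
/-!
Split the absolutely convergent series into its even- and odd-indexed terms. For part (1),
`(i x)^(2k) = (-1)^k x^(2k)`. For part (2), `C(2k, 2) = k(2k - 1)` and `C(2k + 1, 2) = k(2k + 1)`
both have the parity of `k`, so `(-u)^C(n, 2) = (-1)^k u^C(n, 2)` for `n = 2k, 2k + 1`.
-/

open scoped BigOperators

noncomputable section

theorem tsum_eq_tsum_even_add_tsum_odd {E : Type*} [NormedAddCommGroup E] [CompleteSpace E]
    {f : ℕ → E} (hf : Summable f) :
    ∑' n, f n = ∑' k, f (2 * k) + ∑' k, f (2 * k + 1) :=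
  (tsum_even_add_odd (hf.comp_injective (mul_right_injective₀ two_ne_zero))
    (hf.comp_injective ((add_left_injective 1).comp (mul_right_injective₀ two_ne_zero)))).symm

theorem Nat.choose_two_two_mul (k : ℕ) : (2 * k).choose 2 = k + 2 * (k * (k - 1)) := by
  rw [Nat.choose_two_right]
  rcases k with _ | k
  · rfl
  · rw [show 2 * (k + 1) - 1 = 2 * k + 1 by omega, Nat.add_sub_cancel]
    refine Nat.div_eq_of_eq_mul_left two_pos ?_
    ring

theorem Nat.choose_two_two_mul_add_one (k : ℕ) : (2 * k + 1).choose 2 = k + 2 * k ^ 2 := by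
  rw [Nat.choose_two_right, Nat.add_sub_cancel]
  refine Nat.div_eq_of_eq_mul_left two_pos ?_
  ring

section NegPow

variable {R : Type*} [Monoid R] [HasDistribNeg R] (u : R) (k : ℕ)

theorem neg_pow_choose_two_two_mul :
    (-u) ^ (2 * k).choose 2 = (-1) ^ k * u ^ (2 * k).choose 2 := by
  rw [neg_pow, Nat.choose_two_two_mul, pow_add (-1 : R) k, pow_mul, neg_one_sq, one_pow, mul_one]

theorem neg_pow_choose_two_two_mul_add_one :
    (-u) ^ (2 * k + 1).choose 2 = (-1) ^ k * u ^ (2 * k + 1).choose 2 := by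
  rw [neg_pow, Nat.choose_two_two_mul_add_one, pow_add (-1 : R) k, pow_mul, neg_one_sq, one_pow,
    mul_one]

end NegPow

theorem lucasExp_euler_general (s t : ℂ)
    (x z u : ℂ)
    (hconv1 : Summable fun n : ℕ =>
      ‖u ^ (n.choose 2) * (Complex.I * x) ^ n / lucasFact s t n‖)
    (hconv2 : Summable fun n : ℕ =>
      ‖(-u) ^ (n.choose 2) * z ^ n / lucasFact s t n‖) :
    lucasExp s t u (Complex.I * x) = lucasCos s t u x + Complex.I * lucasSin s t u x ∧
    lucasExp s t (-u) z = lucasCos s t u z + lucasSin s t u z := by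
  constructor
  · rw [lucasExp, tsum_eq_tsum_even_add_tsum_odd hconv1.of_norm, lucasCos, lucasSin,
      ← tsum_mul_left]
    congr 1 <;> refine tsum_congr fun k => ?_
    · rw [mul_pow, pow_mul, Complex.I_sq]
      ring
    · rw [mul_pow, pow_succ, pow_mul, Complex.I_sq]
      ring
  · rw [lucasExp, tsum_eq_tsum_even_add_tsum_odd hconv2.of_norm, lucasCos, lucasSin]
    simp only [neg_pow_choose_two_two_mul, neg_pow_choose_two_two_mul_add_one]

/-- Lucas-Pantograph-Euler formulas. -/
theorem lucasExp_euler (s t : ℂ) (hs : s ≠ 0) (ht : t ≠ 0)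
    (hL : ∀ n : ℕ, 1 ≤ n → lucasSeq s t n ≠ 0)
    (x z u : ℂ) (hu : u ≠ 0)
    (hconv1 : Summable fun n : ℕ =>
      ‖u ^ (n.choose 2) * (Complex.I * x) ^ n / lucasFact s t n‖)
    (hconv2 : Summable fun n : ℕ =>
      ‖(-u) ^ (n.choose 2) * z ^ n / lucasFact s t n‖) :
    lucasExp s t u (Complex.I * x) = lucasCos s t u x + Complex.I * lucasSin s t u x ∧
    lucasExp s t (-u) z = lucasCos s t u z + lucasSin s t u z :=
  lucasExp_euler_general s t x z u hconv1 hconv2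
end
end

section
/- Binomial Euler-type decomposition: for all x, y, u, v ∈ ℂ, if the series Σ_{n=0}^{∞} (x ⊕_{−u,−v} y)^{(n)}/{n}_{s,t}! converges absolutely, then Σ_{n=0}^{∞} (x ⊕_{−u,−v} y)^{(n)}/{n}_{s,t}! = cos_{s,t}(x ⊖_{u,v} y) + sin_{s,t}(x ⊕_{u,v} y). -/
open scoped BigOperators

noncomputable section

/-! Since `(j + k).choose 2 = j.choose 2 + k.choose 2 + j * k`, flipping the signs of `u` and `v`
multiplies the `k`-th term of `(x ⊕_{u,v} y)^{(n)}` by `(-1) ^ n.choose 2 * ((-1) ^ (n + 1)) ^ k`.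
For `n = 2m` this is `(-1) ^ m` together with `y ↦ -y`, for `n = 2m + 1` it is `(-1) ^ m`, so
splitting the absolutely convergent series into its even and odd terms yields the cosine and the
sine. -/

theorem Nat.add_choose_two (j k : ℕ) : (j + k).choose 2 = j.choose 2 + k.choose 2 + j * k := by
  induction k with
  | zero => simp
  | succ k ih =>
    rw [← add_assoc, Nat.choose_succ_succ', ih, Nat.choose_succ_succ', Nat.choose_one_right,
      Nat.choose_one_right]
    ring

section NegOnePow

variable {R : Type*} [Monoid R] [HasDistribNeg R]

theorem neg_one_pow_choose_two_add_choose_two (j k : ℕ) :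
    (-1 : R) ^ (j.choose 2 + k.choose 2) = (-1) ^ (j + k).choose 2 * ((-1) ^ (j + k + 1)) ^ k := by
  have hexp : (j + k).choose 2 + (j + k + 1) * k =
      (j.choose 2 + k.choose 2) + (2 * (j * k) + k * (k + 1)) := by
    rw [Nat.add_choose_two]; ring
  have heven : Even (2 * (j * k) + k * (k + 1)) :=
    (even_two_mul _).add (Nat.even_mul_succ_self k)
  rw [← pow_mul, ← pow_add, hexp, pow_add _ _ (2 * (j * k) + k * (k + 1)), heven.neg_one_pow,
    mul_one]

theorem neg_one_pow_choose_two_two_mul (m : ℕ) : (-1 : R) ^ (2 * m).choose 2 = (-1) ^ m := by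
  refine neg_one_pow_congr ?_
  rw [two_mul, Nat.add_choose_two]
  simp [Nat.even_add, Nat.even_mul]

theorem neg_one_pow_choose_two_two_mul_add_one (m : ℕ) :
    (-1 : R) ^ (2 * m + 1).choose 2 = (-1) ^ m := by
  rw [Nat.add_choose_two, Nat.choose_eq_zero_of_lt one_lt_two, add_zero, mul_one, pow_add,
    (even_two_mul m).neg_one_pow, mul_one, neg_one_pow_choose_two_two_mul]

end NegOnePow

theorem lucasPow_neg_neg (s t u v x y : ℂ) (n : ℕ) :
    lucasPow s t (-u) (-v) x y n =
      (-1) ^ n.choose 2 * lucasPow s t u v x ((-1) ^ (n + 1) * y) n := by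
  unfold lucasPow
  rw [Finset.mul_sum]
  refine Finset.sum_congr rfl fun k hk => ?_
  have hsign := neg_one_pow_choose_two_add_choose_two (R := ℂ) (n - k) k
  rw [Nat.sub_add_cancel (Finset.mem_range_succ_iff.mp hk)] at hsign
  rw [neg_pow u, neg_pow v, mul_pow]
  linear_combination (lucasBinom s t n k * u ^ (n - k).choose 2 * v ^ k.choose 2 * x ^ (n - k) *
    y ^ k) * hsign

theorem lucasPow_neg_neg_two_mul (s t u v x y : ℂ) (m : ℕ) :
    lucasPow s t (-u) (-v) x y (2 * m) = (-1) ^ m * lucasPow s t u v x (-y) (2 * m) := by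
  rw [lucasPow_neg_neg, neg_one_pow_choose_two_two_mul, pow_succ, (even_two_mul m).neg_one_pow,
    one_mul, neg_one_mul]

theorem lucasPow_neg_neg_two_mul_add_one (s t u v x y : ℂ) (m : ℕ) :
    lucasPow s t (-u) (-v) x y (2 * m + 1) = (-1) ^ m * lucasPow s t u v x y (2 * m + 1) := by
  rw [lucasPow_neg_neg, neg_one_pow_choose_two_two_mul_add_one, add_assoc,
    (by ring : 2 * m + (1 + 1) = 2 * (m + 1)), (even_two_mul _).neg_one_pow, one_mul]

theorem lucasExp_bin_decomp_general (s t : ℂ)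
    (x y u v : ℂ)
    (hconv : Summable fun n : ℕ =>
      ‖lucasPow s t (-u) (-v) x y n / lucasFact s t n‖) :
    ∑' n : ℕ, lucasPow s t (-u) (-v) x y n / lucasFact s t n =
      (∑' n : ℕ, (-1 : ℂ) ^ n * lucasPow s t u v x (-y) (2 * n) / lucasFact s t (2 * n)) +
        ∑' n : ℕ,
          (-1 : ℂ) ^ n * lucasPow s t u v x y (2 * n + 1) / lucasFact s t (2 * n + 1) := by
  set a : ℕ → ℂ := fun n => lucasPow s t (-u) (-v) x y n / lucasFact s t n
  have hsum : Summable a := hconv.of_norm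
  have hsum_even : Summable fun n => a (2 * n) :=
    hsum.comp_injective (mul_right_injective₀ two_ne_zero)
  have hsum_odd : Summable fun n => a (2 * n + 1) :=
    hsum.comp_injective fun m n h => by simpa using h
  rw [← tsum_even_add_odd hsum_even hsum_odd]
  simp only [a, lucasPow_neg_neg_two_mul, lucasPow_neg_neg_two_mul_add_one, mul_div_assoc]

/-- Binomial Euler-type decomposition. -/
theorem lucasExp_bin_decomp (s t : ℂ) (hs : s ≠ 0) (ht : t ≠ 0)
    (hL : ∀ n : ℕ, 1 ≤ n → lucasSeq s t n ≠ 0)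
    (x y u v : ℂ)
    (hconv : Summable fun n : ℕ =>
      ‖lucasPow s t (-u) (-v) x y n / lucasFact s t n‖) :
    ∑' n : ℕ, lucasPow s t (-u) (-v) x y n / lucasFact s t n =
      (∑' n : ℕ, (-1 : ℂ) ^ n * lucasPow s t u v x (-y) (2 * n) / lucasFact s t (2 * n)) +
        ∑' n : ℕ,
          (-1 : ℂ) ^ n * lucasPow s t u v x y (2 * n + 1) / lucasFact s t (2 * n + 1) :=
  lucasExp_bin_decomp_general s t x y u v hconv
end
end

section
/- Lucas-derivatives of the Lucas-Pantograph sine and cosine: let u ∈ ℂ, u ≠ 0, and assume the series defining sin_{s,t}(w,u) and cos_{s,t}(w,u) converge absolutely for every w ∈ ℂ. Then for every x ≠ 0: D_{s,t}[sin_{s,t}(·,u)](x) = cos_{s,t}(ux, u) and D_{s,t}[cos_{s,t}(·,u)](x) = −sin_{s,t}(ux, u); consequently D_{s,t}²[sin_{s,t}(·,u)](x) = −u·sin_{s,t}(u²x, u) and D_{s,t}²[cos_{s,t}(·,u)](x) = −u·cos_{s,t}(u²x, u). -/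
open scoped BigOperators

noncomputable section

/-! The Lucas-derivative sends `z ^ m` to `{m}_{s,t} z ^ (m - 1)`, by Binet's formula
`φ ^ m - φ' ^ m = (φ - φ') {m}_{s,t}`, and it commutes with convergent sums. The pantograph
coefficients `a m = u ^ C(m,2) / {m}_{s,t}!` satisfy `a (m + 1) {m + 1}_{s,t} = u ^ m a m`, so
differentiating the sine and cosine series termwise shifts the index by one and turns `z ^ m`
into `(u z) ^ m`. The second derivatives follow from `D[f (u ·)](x) = u (D f)(u x)`. -/
theorem pow_sub_pow_eq_mul_lucasSeq {s t p q : ℂ} (hsum : p + q = s) (hprod : p * q = -t)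
    (n : ℕ) : p ^ n - q ^ n = (p - q) * lucasSeq s t n := by
  subst hsum
  obtain rfl : t = -(p * q) := by rw [hprod, neg_neg]
  induction n using Nat.twoStepInduction with
  | zero => simp [lucasSeq]
  | one => simp [lucasSeq]
  | more n h₀ h₁ =>
    rw [lucasSeq]
    linear_combination (p + q) * h₁ - p * q * h₀

section LucasDeriv

variable {p q : ℂ}

theorem lucasDeriv0_of_ne_zero (f : ℂ → ℂ) {x : ℂ} (hx : x ≠ 0) :
    lucasDeriv0 p q f x = lucasDeriv p q f x :=
  if_neg hx

theorem lucasDeriv0_congr (hp : p ≠ 0) (hq : q ≠ 0) {f g : ℂ → ℂ}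
    (h : ∀ y ≠ 0, f y = g y) :
    lucasDeriv0 p q f = lucasDeriv0 p q g := by
  funext x
  by_cases hx : x = 0
  · simp [lucasDeriv0, hx]
  · simp only [lucasDeriv0, if_neg hx, h _ (mul_ne_zero hp hx), h _ (mul_ne_zero hq hx)]

theorem lucasDeriv0_comp_const_mul (f : ℂ → ℂ) (u x : ℂ) :
    lucasDeriv0 p q (fun y => f (u * y)) x = u * lucasDeriv0 p q f (u * x) := by
  by_cases hu : u = 0
  · simp [lucasDeriv0, hu]
  by_cases hx : x = 0
  · simp [lucasDeriv0, hx]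
  simp only [lucasDeriv0, if_neg hx, if_neg (mul_ne_zero hu hx)]
  rw [mul_left_comm u p, mul_left_comm u q, mul_left_comm (p - q) u, ← mul_div_assoc,
    mul_div_mul_left _ _ hu]

theorem lucasDeriv0_neg (f : ℂ → ℂ) (x : ℂ) :
    lucasDeriv0 p q (fun y => -f y) x = -lucasDeriv0 p q f x := by
  by_cases hx : x = 0
  · simp [lucasDeriv0, hx]
  · simp only [lucasDeriv0, if_neg hx]
    ring

theorem hasSum_lucasDeriv0_tsum {f : ℕ → ℂ → ℂ} {x : ℂ} (hx : x ≠ 0)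
    (hfp : Summable fun n => f n (p * x)) (hfq : Summable fun n => f n (q * x)) :
    HasSum (fun n => lucasDeriv0 p q (f n) x) (lucasDeriv0 p q (fun z => ∑' n, f n z) x) := by
  simp only [lucasDeriv0, if_neg hx]
  exact (hfp.hasSum.sub hfq.hasSum).div_const _

theorem lucasDeriv0_const_mul_pow {s t : ℂ} (hsum : p + q = s) (hprod : p * q = -t)
    (hpq : p ≠ q) (c : ℂ) (m : ℕ) {x : ℂ} (hx : x ≠ 0) :
    lucasDeriv0 p q (fun z => c * z ^ m) x = c * lucasSeq s t m * x ^ (m - 1) := by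
  have hbinet := pow_sub_pow_eq_mul_lucasSeq hsum hprod m
  rw [lucasDeriv0_of_ne_zero _ hx, lucasDeriv]
  cases m with
  | zero => simp [lucasSeq]
  | succ m =>
    rw [← mul_sub, mul_pow, mul_pow, ← sub_mul, hbinet, Nat.add_sub_cancel, pow_succ]
    field_simp [sub_ne_zero.mpr hpq]

theorem hasSum_lucasDeriv0_tsum_mul_pow {s t : ℂ} (hsum : p + q = s) (hprod : p * q = -t)
    (hpq : p ≠ q) (c : ℕ → ℂ) (e : ℕ → ℕ) {x : ℂ} (hx : x ≠ 0)
    (hfp : Summable fun n => c n * (p * x) ^ e n) (hfq : Summable fun n => c n * (q * x) ^ e n) :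
    HasSum (fun n => c n * lucasSeq s t (e n) * x ^ (e n - 1))
      (lucasDeriv0 p q (fun z => ∑' n, c n * z ^ e n) x) := by
  simpa only [lucasDeriv0_const_mul_pow hsum hprod hpq _ _ hx] using
    hasSum_lucasDeriv0_tsum (f := fun n z => c n * z ^ e n) hx hfp hfq

end LucasDeriv

section Pantograph

variable {s t p q u : ℂ}

def pantographCoeff (s t u : ℂ) (m : ℕ) : ℂ :=
  u ^ m.choose 2 / lucasFact s t m

theorem pantographCoeff_succ_mul_lucasSeq {m : ℕ} (hm : lucasSeq s t (m + 1) ≠ 0) :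
    pantographCoeff s t u (m + 1) * lucasSeq s t (m + 1) = u ^ m * pantographCoeff s t u m := by
  rw [pantographCoeff, pantographCoeff, lucasFact, Nat.choose_succ_succ', Nat.choose_one_right,
    pow_add, div_mul_eq_div_div, div_mul_cancel₀ _ hm]
  ring

theorem mul_pow_div_lucasFact (a w : ℂ) (m : ℕ) :
    a * u ^ m.choose 2 * w ^ m / lucasFact s t m = a * pantographCoeff s t u m * w ^ m := by
  rw [pantographCoeff]; ring

theorem lucasDeriv0_lucasSin (hsum : p + q = s) (hprod : p * q = -t) (hpq : p ≠ q)
    (hL : ∀ n, 1 ≤ n → lucasSeq s t n ≠ 0)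
    (hconv : ∀ w : ℂ, Summable fun n : ℕ =>
      (-1 : ℂ) ^ n * u ^ ((2 * n + 1).choose 2) * w ^ (2 * n + 1) / lucasFact s t (2 * n + 1))
    {x : ℂ} (hx : x ≠ 0) :
    lucasDeriv0 p q (lucasSin s t u) x = lucasCos s t u (u * x) := by
  unfold lucasSin lucasCos
  simp only [mul_pow_div_lucasFact] at hconv ⊢
  have hD := hasSum_lucasDeriv0_tsum_mul_pow hsum hprod hpq
    (fun n => (-1) ^ n * pantographCoeff s t u (2 * n + 1)) (fun n => 2 * n + 1) hx
    (hconv (p * x)) (hconv (q * x))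
  rw [← hD.tsum_eq]
  refine tsum_congr fun n => ?_
  rw [mul_assoc ((-1 : ℂ) ^ n), pantographCoeff_succ_mul_lucasSeq (hL _ (2 * n).succ_pos),
    Nat.add_sub_cancel]
  ring

theorem lucasDeriv0_lucasCos (hsum : p + q = s) (hprod : p * q = -t) (hpq : p ≠ q)
    (hL : ∀ n, 1 ≤ n → lucasSeq s t n ≠ 0)
    (hconv : ∀ w : ℂ, Summable fun n : ℕ =>
      (-1 : ℂ) ^ n * u ^ ((2 * n).choose 2) * w ^ (2 * n) / lucasFact s t (2 * n))
    {x : ℂ} (hx : x ≠ 0) :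
    lucasDeriv0 p q (lucasCos s t u) x = -lucasSin s t u (u * x) := by
  unfold lucasSin lucasCos
  simp only [mul_pow_div_lucasFact] at hconv ⊢
  have hD := hasSum_lucasDeriv0_tsum_mul_pow hsum hprod hpq
    (fun n => (-1) ^ n * pantographCoeff s t u (2 * n)) (fun n => 2 * n) hx
    (hconv (p * x)) (hconv (q * x))
  rw [← hD.tsum_eq, hD.summable.tsum_eq_zero_add, ← tsum_neg]
  simp only [lucasSeq, mul_zero, zero_mul, zero_add]
  refine tsum_congr fun n => ?_
  rw [show 2 * (n + 1) = 2 * n + 1 + 1 by ring, mul_assoc ((-1 : ℂ) ^ (n + 1)),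
    pantographCoeff_succ_mul_lucasSeq (hL _ (2 * n + 1).succ_pos), Nat.add_sub_cancel]
  ring

end Pantograph

theorem lucasDeriv_sin_cos_general (s t : ℂ) (ht : t ≠ 0)
    (hst : s ^ 2 + 4 * t ≠ 0) (hL : ∀ n : ℕ, 1 ≤ n → lucasSeq s t n ≠ 0)
    (d : ℂ) (hd : d ^ 2 = s ^ 2 + 4 * t)
    (u : ℂ) (hu : u ≠ 0)
    (hconvs : ∀ w : ℂ, Summable fun n : ℕ =>
      ‖(-1 : ℂ) ^ n * u ^ ((2 * n + 1).choose 2) * w ^ (2 * n + 1) / lucasFact s t (2 * n + 1)‖)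
    (hconvc : ∀ w : ℂ, Summable fun n : ℕ =>
      ‖(-1 : ℂ) ^ n * u ^ ((2 * n).choose 2) * w ^ (2 * n) / lucasFact s t (2 * n)‖)
    (x : ℂ) (hx : x ≠ 0) :
    lucasDeriv0 ((s + d) / 2) ((s - d) / 2) (lucasSin s t u) x = lucasCos s t u (u * x) ∧
    lucasDeriv0 ((s + d) / 2) ((s - d) / 2) (lucasCos s t u) x = -lucasSin s t u (u * x) ∧
    (lucasDeriv0 ((s + d) / 2) ((s - d) / 2))^[2] (lucasSin s t u) x =
      -(u * lucasSin s t u (u ^ 2 * x)) ∧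
    (lucasDeriv0 ((s + d) / 2) ((s - d) / 2))^[2] (lucasCos s t u) x =
      -(u * lucasCos s t u (u ^ 2 * x)) := by
  have hsum : (s + d) / 2 + (s - d) / 2 = s := by ring
  have hprod : (s + d) / 2 * ((s - d) / 2) = -t := by linear_combination -hd / 4
  have hpq : (s + d) / 2 ≠ (s - d) / 2 := fun h =>
    hst (by rw [← hd, show d = 0 by linear_combination h]; ring)
  have hpq0 : (s + d) / 2 * ((s - d) / 2) ≠ 0 := hprod ▸ neg_ne_zero.mpr ht
  have hp := left_ne_zero_of_mul hpq0
  have hq := right_ne_zero_of_mul hpq0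
  have hsin (y : ℂ) (hy : y ≠ 0) :=
    lucasDeriv0_lucasSin hsum hprod hpq hL (fun w => (hconvs w).of_norm) hy
  have hcos (y : ℂ) (hy : y ≠ 0) :=
    lucasDeriv0_lucasCos hsum hprod hpq hL (fun w => (hconvc w).of_norm) hy
  refine ⟨hsin x hx, hcos x hx, ?_, ?_⟩
  · rw [Function.iterate_succ_apply', Function.iterate_one, lucasDeriv0_congr hp hq hsin,
      lucasDeriv0_comp_const_mul, hcos _ (mul_ne_zero hu hx), ← mul_assoc, ← sq, mul_neg]
  · rw [Function.iterate_succ_apply', Function.iterate_one, lucasDeriv0_congr hp hq hcos,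
      lucasDeriv0_neg, lucasDeriv0_comp_const_mul, hsin _ (mul_ne_zero hu hx), ← mul_assoc,
      ← sq]

/-- Lucas-derivatives of the Lucas-Pantograph sine and cosine, where `φ = (s+d)/2`,
`φ' = (s-d)/2` with `d` a square root of `s²+4t ≠ 0`. -/
theorem lucasDeriv_sin_cos (s t : ℂ) (hs : s ≠ 0) (ht : t ≠ 0)
    (hst : s ^ 2 + 4 * t ≠ 0) (hL : ∀ n : ℕ, 1 ≤ n → lucasSeq s t n ≠ 0)
    (d : ℂ) (hd : d ^ 2 = s ^ 2 + 4 * t)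
    (u : ℂ) (hu : u ≠ 0)
    (hconvs : ∀ w : ℂ, Summable fun n : ℕ =>
      ‖(-1 : ℂ) ^ n * u ^ ((2 * n + 1).choose 2) * w ^ (2 * n + 1) / lucasFact s t (2 * n + 1)‖)
    (hconvc : ∀ w : ℂ, Summable fun n : ℕ =>
      ‖(-1 : ℂ) ^ n * u ^ ((2 * n).choose 2) * w ^ (2 * n) / lucasFact s t (2 * n)‖)
    (x : ℂ) (hx : x ≠ 0) :
    lucasDeriv0 ((s + d) / 2) ((s - d) / 2) (lucasSin s t u) x = lucasCos s t u (u * x) ∧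
    lucasDeriv0 ((s + d) / 2) ((s - d) / 2) (lucasCos s t u) x = -lucasSin s t u (u * x) ∧
    (lucasDeriv0 ((s + d) / 2) ((s - d) / 2))^[2] (lucasSin s t u) x =
      -(u * lucasSin s t u (u ^ 2 * x)) ∧
    (lucasDeriv0 ((s + d) / 2) ((s - d) / 2))^[2] (lucasCos s t u) x =
      -(u * lucasCos s t u (u ^ 2 * x)) :=
  lucasDeriv_sin_cos_general s t ht hst hL d hd u hu hconvs hconvc x hx
end
end
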